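/- arXiv:2002.03497 — 5 statements merged into one kernel-verified Lean document; each statement's English description precedes it below -/
import Mathlib

section
/- Let D ≥ 1 and n ≥ D be integers, ℓ: ℝ^D → [0, B_ℓ] a bounded measurable loss, and f: ℝ^D → ℝ^D a measurable bijection with measurable inverse. For an i.i.d. sample S₁, …, S_n from a factorized distribution q on ℝ^D, let Ř = n^{−D} Σ_{(i₁,…,i_D) ∈ [n]^D} ℓ(f(S_{i₁}^{(1)}, …, S_{i_D}^{(D)})) be the cross-combination risk estimator and R̂ = n^{−1} Σ_{i=1}^n ℓ(f(S_i)) the ordinary empirical risk. Then for every factorized q, Var_q(Ř) ≤ Var_q(R̂). -/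
/-!
Permuting the sample indices independently in each coordinate, `S k d ↦ S (π d k) d`, preserves
the law of an i.i.d. sample from a factorized distribution: its `n·D` real coordinates are
independent and the law of each depends only on the coordinate `d`. Averaging the empirical risk
over all such `π` gives exactly the cross-combination estimator, because for each `k` the map
`π ↦ (π d k)_d` hits every index tuple equally often. Finally, an average of equally distributed
square-integrable variables has variance at most their common variance, since
`2 cov[X, Y] ≤ Var[X] + Var[Y]`.
-/

open MeasureTheory ProbabilityTheory

/-- A probability distribution on `ℝ^D` is *factorized* if it is the product of `D`
absolutely continuous marginal distributions on `ℝ`. -/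
def IsFactorized {D : ℕ} (q : Measure (Fin D → ℝ)) : Prop :=
  ∃ m : Fin D → Measure ℝ, (∀ d, IsProbabilityMeasure (m d)) ∧
    (∀ d, m d ≪ (volume : Measure ℝ)) ∧ q = Measure.pi m

open Finset

namespace ProbabilityTheory

variable {Ω : Type*} {mΩ : MeasurableSpace Ω} {μ : Measure Ω}

lemma two_mul_covariance_le_variance_add_variance [IsFiniteMeasure μ] {X Y : Ω → ℝ}
    (hX : MemLp X 2 μ) (hY : MemLp Y 2 μ) : 2 * cov[X, Y; μ] ≤ Var[X; μ] + Var[Y; μ] := by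
  have := variance_nonneg (X - Y) μ
  rw [variance_sub hX hY] at this
  linarith

lemma variance_fun_sum_le_card_sq_mul [IsFiniteMeasure μ] {ι : Type*} {s : Finset ι}
    {X : ι → Ω → ℝ} {v : ℝ} (hX : ∀ i ∈ s, MemLp (X i) 2 μ) (hv : ∀ i ∈ s, Var[X i; μ] ≤ v) :
    Var[fun ω ↦ ∑ i ∈ s, X i ω; μ] ≤ #s ^ 2 * v := by
  rw [variance_fun_sum' hX]
  calc ∑ i ∈ s, ∑ j ∈ s, cov[X i, X j; μ] ≤ ∑ _i ∈ s, ∑ _j ∈ s, v :=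
        sum_le_sum fun i hi ↦ sum_le_sum fun j hj ↦ by
          linarith [two_mul_covariance_le_variance_add_variance (hX i hi) (hX j hj),
            hv i hi, hv j hj]
    _ = #s ^ 2 * v := by simp only [sum_const, nsmul_eq_mul]; ring

end ProbabilityTheory

section CrossCombination

variable {ι κ X : Type*}

def columnShuffle (π : κ → Equiv.Perm ι) (S : ι → κ → X) : ι → κ → X :=
  fun k d ↦ S (π d k) d

lemma card_smul_sum_apply_perm {M : Type*} [AddCommMonoid M] [Fintype ι] [DecidableEq ι]
    [Fintype κ] [DecidableEq κ] (k : ι) (G : (κ → ι) → M) :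
    Fintype.card (κ → ι) • ∑ π : κ → Equiv.Perm ι, G (fun d ↦ π d k) =
      Fintype.card (κ → Equiv.Perm ι) • ∑ i, G i := by
  calc Fintype.card (κ → ι) • ∑ π : κ → Equiv.Perm ι, G (fun d ↦ π d k)
      = ∑ _ρ : κ → ι, ∑ π : κ → Equiv.Perm ι, G (fun d ↦ π d k) := by
        rw [sum_const, card_univ]
    _ = ∑ ρ : κ → ι, ∑ π : κ → Equiv.Perm ι, G (fun d ↦ π d (ρ d)) :=
        sum_congr rfl fun ρ _ ↦ Fintype.sum_equiv (Equiv.mulRight fun d ↦ Equiv.swap k (ρ d))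
          _ _ fun π ↦ by simp
    _ = ∑ π : κ → Equiv.Perm ι, ∑ ρ : κ → ι, G (fun d ↦ π d (ρ d)) := sum_comm
    _ = ∑ _π : κ → Equiv.Perm ι, ∑ i, G i :=
        sum_congr rfl fun π _ ↦ Fintype.sum_equiv (Equiv.piCongrRight π) _ _ fun _ ↦ rfl
    _ = Fintype.card (κ → Equiv.Perm ι) • ∑ i, G i := by rw [sum_const, card_univ]

lemma measurePreserving_columnShuffle [Fintype ι] [Fintype κ] [MeasurableSpace X]
    (m : κ → Measure X) [∀ d, IsProbabilityMeasure (m d)] (π : κ → Equiv.Perm ι) :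
    MeasurePreserving (columnShuffle π) (Measure.pi fun _ : ι ↦ Measure.pi m)
      (Measure.pi fun _ : ι ↦ Measure.pi m) := by
  have hcurry : MeasurePreserving (MeasurableEquiv.curry ι κ X)
      (Measure.pi fun p : ι × κ ↦ m p.2) (Measure.pi fun _ : ι ↦ Measure.pi m) :=
    ⟨(MeasurableEquiv.curry ι κ X).measurable, by
      simpa only [Measure.infinitePi_eq_pi] using
        Measure.infinitePi_map_curry fun (_ : ι) (d : κ) ↦ m d⟩
  let σ : ι × κ ≃ ι × κ :=
    { toFun p := (π p.2 p.1, p.2)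
      invFun p := ((π p.2).symm p.1, p.2)
      left_inv p := by simp
      right_inv p := by simp }
  have hflat := (measurePreserving_piCongrLeft (fun p : ι × κ ↦ m p.2) σ).symm
  convert hcurry.comp (hflat.comp hcurry.symm) using 1
  ext S k d
  rfl

variable [Fintype ι] [Fintype κ]

noncomputable def empiricalRisk (g : (κ → X) → ℝ) (S : ι → κ → X) : ℝ :=
  (Fintype.card ι : ℝ)⁻¹ * ∑ k, g (S k)

noncomputable def crossRisk [DecidableEq κ] (g : (κ → X) → ℝ) (S : ι → κ → X) : ℝ :=
  ((Fintype.card ι : ℝ) ^ Fintype.card κ)⁻¹ * ∑ i : κ → ι, g fun d ↦ S (i d) d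

lemma crossRisk_eq_average_empiricalRisk_columnShuffle [Nonempty ι] [DecidableEq ι]
    [DecidableEq κ] (g : (κ → X) → ℝ) (S : ι → κ → X) :
    crossRisk g S = (Fintype.card (κ → Equiv.Perm ι) : ℝ)⁻¹ *
      ∑ π : κ → Equiv.Perm ι, empiricalRisk g (columnShuffle π S) := by
  set G : (κ → ι) → ℝ := fun i ↦ g fun d ↦ S (i d) d
  set K : ℝ := ↑(Fintype.card (κ → Equiv.Perm ι))
  have hK : K ≠ 0 := by positivity
  have hsum : ∀ k, ∑ π : κ → Equiv.Perm ι, G (fun d ↦ π d k) =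
      (K * ∑ i, G i) / (Fintype.card ι : ℝ) ^ Fintype.card κ := fun k ↦ by
    rw [eq_div_iff (by positivity), mul_comm]
    simpa only [nsmul_eq_mul, Fintype.card_fun (α := κ) (β := ι), Nat.cast_pow] using
      card_smul_sum_apply_perm k G
  calc crossRisk g S
      = K⁻¹ * ((Fintype.card ι : ℝ)⁻¹ *
          ∑ k : ι, ∑ π : κ → Equiv.Perm ι, G (fun d ↦ π d k)) := by
        simp only [hsum, sum_const, card_univ, nsmul_eq_mul, crossRisk]
        field_simp
        rfl
    _ = K⁻¹ * ∑ π : κ → Equiv.Perm ι, empiricalRisk g (columnShuffle π S) := by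
        rw [sum_comm, mul_sum]
        rfl

theorem variance_crossRisk_le_variance_empiricalRisk [Nonempty ι] [DecidableEq κ]
    [MeasurableSpace X] (m : κ → Measure X) [∀ d, IsProbabilityMeasure (m d)]
    {g : (κ → X) → ℝ} (hg : MemLp g 2 (Measure.pi m)) :
    Var[crossRisk g; Measure.pi fun _ : ι ↦ Measure.pi m] ≤
      Var[empiricalRisk g; Measure.pi fun _ : ι ↦ Measure.pi m] := by
  classical
  set ν := Measure.pi fun _ : ι ↦ Measure.pi m
  have hR : MemLp (empiricalRisk g) 2 ν :=
    (memLp_finsetSum univ fun k _ ↦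
      hg.comp_measurePreserving (measurePreserving_eval _ k)).const_mul _
  set K : ℝ := ↑(Fintype.card (κ → Equiv.Perm ι))
  have hK : K ≠ 0 := by positivity
  have hshuffle := measurePreserving_columnShuffle (ι := ι) m
  have hsum : Var[fun S ↦ ∑ π : κ → Equiv.Perm ι, empiricalRisk g (columnShuffle π S); ν] ≤
      K ^ 2 * Var[empiricalRisk g; ν] :=
    variance_fun_sum_le_card_sq_mul (fun π _ ↦ hR.comp_measurePreserving (hshuffle π))
      fun π _ ↦ ((hshuffle π).variance_fun_comp hR.aemeasurable).le
  rw [funext (crossRisk_eq_average_empiricalRisk_columnShuffle g), variance_const_mul]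
  calc K⁻¹ ^ 2 * Var[fun S ↦ ∑ π : κ → Equiv.Perm ι, empiricalRisk g (columnShuffle π S); ν]
      ≤ K⁻¹ ^ 2 * (K ^ 2 * Var[empiricalRisk g; ν]) := by gcongr
    _ = Var[empiricalRisk g; ν] := by field_simp

end CrossCombination

theorem stmt1_general (D n : ℕ) (hD : 1 ≤ D) (hn : D ≤ n)
    (Bl : ℝ) (ℓ : (Fin D → ℝ) → ℝ) (hℓm : Measurable ℓ)
    (hℓb : ∀ z, ℓ z ∈ Set.Icc (0 : ℝ) Bl)
    (f : (Fin D → ℝ) → (Fin D → ℝ)) (hfm : Measurable f)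
    (Rcheck Rhat : (Fin n → Fin D → ℝ) → ℝ)
    (hRcheck : ∀ S : Fin n → Fin D → ℝ,
      Rcheck S = ((n : ℝ) ^ D)⁻¹ *
        ∑ i : Fin D → Fin n, ℓ (f fun d => S (i d) d))
    (hRhat : ∀ S : Fin n → Fin D → ℝ,
      Rhat S = (n : ℝ)⁻¹ * ∑ i : Fin n, ℓ (f (S i))) :
    ∀ q : Measure (Fin D → ℝ), IsFactorized q →
      variance Rcheck (Measure.pi fun _ : Fin n => q) ≤
        variance Rhat (Measure.pi fun _ : Fin n => q) := by
  rintro q ⟨m, hm, -, rfl⟩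
  have : Nonempty (Fin n) := ⟨⟨0, by omega⟩⟩
  have hcross : Rcheck = crossRisk fun z ↦ ℓ (f z) :=
    funext fun S ↦ by simp only [hRcheck, crossRisk, Fintype.card_fin]
  have hempirical : Rhat = empiricalRisk fun z ↦ ℓ (f z) :=
    funext fun S ↦ by simp only [hRhat, empiricalRisk, Fintype.card_fin]
  rw [hcross, hempirical]
  refine variance_crossRisk_le_variance_empiricalRisk m <|
    MemLp.of_bound (hℓm.comp hfm).aestronglyMeasurable Bl (ae_of_all _ fun z ↦ ?_)
  obtain ⟨hℓ₀, hℓ₁⟩ := hℓb (f z)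
  exact abs_le.2 ⟨by linarith, hℓ₁⟩

/-- The cross-combination risk estimator has variance no larger than that of the
ordinary empirical risk, for every factorized distribution `q`. -/
theorem stmt1 (D n : ℕ) (hD : 1 ≤ D) (hn : D ≤ n)
    (Bl : ℝ) (ℓ : (Fin D → ℝ) → ℝ) (hℓm : Measurable ℓ)
    (hℓb : ∀ z, ℓ z ∈ Set.Icc (0 : ℝ) Bl)
    (f : (Fin D → ℝ) → (Fin D → ℝ)) (hfm : Measurable f)
    (hfb : Function.Bijective f) (hfinv : Measurable (Function.invFun f))
    (Rcheck Rhat : (Fin n → Fin D → ℝ) → ℝ)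
    (hRcheck : ∀ S : Fin n → Fin D → ℝ,
      Rcheck S = ((n : ℝ) ^ D)⁻¹ *
        ∑ i : Fin D → Fin n, ℓ (f fun d => S (i d) d))
    (hRhat : ∀ S : Fin n → Fin D → ℝ,
      Rhat S = (n : ℝ)⁻¹ * ∑ i : Fin n, ℓ (f (S i))) :
    ∀ q : Measure (Fin D → ℝ), IsFactorized q →
      variance Rcheck (Measure.pi fun _ : Fin n => q) ≤
        variance Rhat (Measure.pi fun _ : Fin n => q) :=
  stmt1_general D n hD hn Bl ℓ hℓm hℓb f hfm Rcheck Rhat hRcheck hRhat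
end

section
/- Let D ≥ 1 and n ≥ D be integers, ℓ: ℝ^D → [0, B_ℓ] a bounded measurable loss, and f: ℝ^D → ℝ^D a measurable bijection with measurable inverse. If S₁, …, S_n are i.i.d. from a factorized distribution q on ℝ^D, then the cross-combination estimator Ř = n^{−D} Σ_{(i₁,…,i_D) ∈ [n]^D} ℓ(f(S_{i₁}^{(1)}, …, S_{i_D}^{(D)})) satisfies E_q[Ř] = ∫ ℓ(f(s)) dq(s); that is, Ř is an unbiased estimator of the risk. -/
open MeasureTheory ProbabilityTheory

/-- Pushing forward the i.i.d. product measure under coordinate selection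
`S ↦ (S (i 1) 1, …, S (i D) D)` recovers the factorized measure `Measure.pi m`. -/
lemma map_select {D n : ℕ} (m : Fin D → Measure ℝ)
    (hm : ∀ d, IsProbabilityMeasure (m d)) (i : Fin D → Fin n) :
    Measure.map (fun S : Fin n → Fin D → ℝ => fun d => S (i d) d)
      (Measure.pi fun _ : Fin n => Measure.pi m) = Measure.pi m := by
  haveI := hm
  have hT : Measurable (fun S : Fin n → Fin D → ℝ => fun d => S (i d) d) :=
    measurable_pi_lambda _ fun d => (measurable_pi_apply d).comp (measurable_pi_apply (i d))
  haveI : SFinite (Measure.map (fun S : Fin n → Fin D → ℝ => fun d => S (i d) d)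
      (Measure.pi fun _ : Fin n => Measure.pi m)) := by
    haveI : IsProbabilityMeasure (Measure.map (fun S : Fin n → Fin D → ℝ => fun d => S (i d) d)
        (Measure.pi fun _ : Fin n => Measure.pi m)) := Measure.isProbabilityMeasure_map hT.aemeasurable
    infer_instance
  refine (Measure.pi_eq fun s hs => ?_).symm
  rw [Measure.map_apply hT (MeasurableSet.univ_pi hs)]
  have hset : (fun S : Fin n → Fin D → ℝ => fun d => S (i d) d) ⁻¹' (Set.pi Set.univ s)
      = Set.pi Set.univ (fun j => Set.pi Set.univ (fun d => if i d = j then s d else Set.univ)) := by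
    ext S
    simp only [Set.mem_preimage, Set.mem_pi, Set.mem_univ, true_implies]
    constructor
    · intro h j d
      by_cases hij : i d = j
      · simpa [hij] using hij ▸ h d
      · simp [hij]
    · intro h d
      have := h (i d) d
      simpa using this
  rw [hset, Measure.pi_pi]
  have : ∀ j, (Measure.pi m) (Set.pi Set.univ (fun d => if i d = j then s d else Set.univ))
      = ∏ d, (if i d = j then m d (s d) else 1) := by
    intro j
    rw [Measure.pi_pi]
    refine Finset.prod_congr rfl fun d _ => ?_
    split <;> simp
  simp_rw [this]
  rw [Finset.prod_comm]
  refine Finset.prod_congr rfl fun d _ => ?_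
  simp [Finset.prod_ite_eq]

/-- The cross-combination estimator `Ř` is an unbiased estimator of the risk:
`E_q[Ř] = ∫ ℓ(f s) dq(s)` for any factorized `q`. -/
theorem stmt2 (D n : ℕ) (hD : 1 ≤ D) (hn : D ≤ n)
    (Bl : ℝ) (ℓ : (Fin D → ℝ) → ℝ) (hℓm : Measurable ℓ)
    (hℓb : ∀ z, ℓ z ∈ Set.Icc (0 : ℝ) Bl)
    (f : (Fin D → ℝ) → (Fin D → ℝ)) (hfm : Measurable f)
    (hfb : Function.Bijective f) (hfinv : Measurable (Function.invFun f))
    (Rcheck : (Fin n → Fin D → ℝ) → ℝ)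
    (hRcheck : ∀ S : Fin n → Fin D → ℝ,
      Rcheck S = ((n : ℝ) ^ D)⁻¹ *
        ∑ i : Fin D → Fin n, ℓ (f fun d => S (i d) d))
    (q : Measure (Fin D → ℝ)) (hq : IsFactorized q) :
    ∫ S, Rcheck S ∂(Measure.pi fun _ : Fin n => q) = ∫ s, ℓ (f s) ∂q := by
  obtain ⟨m, hm, -, rfl⟩ := hq
  haveI := hm
  simp_rw [hRcheck]
  have hT : ∀ i : Fin D → Fin n, Measurable (fun S : Fin n → Fin D → ℝ => fun d => S (i d) d) :=
    fun i => measurable_pi_lambda _ fun d => (measurable_pi_apply d).comp (measurable_pi_apply (i d))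
  have hint : ∀ i : Fin D → Fin n,
      Integrable (fun S : Fin n → Fin D → ℝ => ℓ (f fun d => S (i d) d))
        (Measure.pi fun _ : Fin n => Measure.pi m) := by
    intro i
    refine (integrable_const Bl).mono' ((hℓm.comp (hfm.comp (hT i))).aestronglyMeasurable) ?_
    refine Filter.Eventually.of_forall fun S => ?_
    have h := hℓb (f fun d => S (i d) d)
    rw [Real.norm_eq_abs, abs_of_nonneg h.1]
    exact h.2
  rw [integral_const_mul, integral_finset_sum _ fun i _ => hint i]
  have key : ∀ i : Fin D → Fin n,
      ∫ S, ℓ (f fun d => S (i d) d) ∂(Measure.pi fun _ : Fin n => Measure.pi m)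
        = ∫ s, ℓ (f s) ∂(Measure.pi m) := by
    intro i
    have h := integral_map (μ := Measure.pi fun _ : Fin n => Measure.pi m)
      (φ := fun S : Fin n → Fin D → ℝ => fun d => S (i d) d)
      (hT i).aemeasurable (hℓm.comp hfm).aestronglyMeasurable
    rw [map_select m hm i] at h
    simpa using h.symm
  simp_rw [key]
  rw [Finset.sum_const, Finset.card_univ, Fintype.card_fun, Fintype.card_fin, Fintype.card_fin,
    nsmul_eq_mul, Nat.cast_pow, ← mul_assoc, inv_mul_cancel₀, one_mul]
  exact pow_ne_zero _ (Nat.cast_ne_zero.mpr (by omega))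
end

section
/- Let D ≥ 1 and n ≥ D, let 𝒢 be a set indexing a family of symmetric measurable kernels ℓ̃_g: (ℝ^D)^D → [0, B_ℓ], and let S₁, …, S_n be i.i.d. random vectors in ℝ^D. For each g let V(g) = n^{−D} Σ_{(i₁,…,i_D) ∈ [n]^D} ℓ̃_g(S_{i₁},…,S_{i_D}) be the V-statistic and U_D(g) = C(n,D)^{−1} Σ_{1≤i₁<⋯<i_D≤n} ℓ̃_g(S_{i₁},…,S_{i_D}) the degree-D U-statistic. Then, with w_j = n^{−D} |𝔊_j^D| C(n,j), sup_{g ∈ 𝒢} |V(g) − E V(g)| ≤ w_D · sup_{g ∈ 𝒢} |U_D(g) − E U_D(g)| + 2 B_ℓ Σ_{j=1}^{D−1} w_j. -/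
open MeasureTheory

/-- The set of strictly increasing `j`-tuples of indices in `Fin n`,
representing `j`-element combinations `1 ≤ i₁ < ⋯ < i_j ≤ n` without replacement. -/
noncomputable def monoTuples (j n : ℕ) : Finset (Fin j → Fin n) := by
  classical exact Finset.univ.filter fun i => StrictMono i

/-!
Split the sum defining `V` over all index maps `i : [D] → [n]` into injective and non-injective
maps. By symmetry of the kernel, every injective map is an increasing tuple composed with a
permutation, so the injective part is `D!` times the sum defining `U`, which is `w_D · U`. Grouping
the non-injective maps by the size `j < D` of their image, and relabelling each image as `[j]`,
there are `Σ_{j=1}^{D-1} C(n,j) |𝔊_j^D|` of them; the remainder therefore takes values in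
`[0, B_ℓ Σ_{j<D} w_j]`, and so its centred version is bounded by that constant.
-/

open Finset Function
open scoped Nat

theorem card_surjective_self {ι : Type*} [Fintype ι] [DecidableEq ι] :
    Fintype.card {τ : ι → ι // Surjective τ} = (Fintype.card ι)! := by
  rw [← Fintype.card_perm]
  exact Fintype.card_congr
    { toFun := fun τ => Equiv.ofBijective τ.1 τ.2.bijective_of_finite
      invFun := fun e => ⟨e, e.surjective⟩
      left_inv := fun _ => rfl
      right_inv := fun _ => Equiv.ext fun _ => rfl }

section Counting

variable {ι β : Type*} [Fintype ι] [DecidableEq β]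

noncomputable def imageEqEquivSurjective (s : Finset β) :
    {f : ι → β // univ.image f = s} ≃ {τ : ι → Fin #s // Surjective τ} where
  toFun f :=
    ⟨fun i => s.equivFin ⟨f.1 i, by simpa [f.2] using mem_image_of_mem f.1 (mem_univ i)⟩, by
      intro k
      have hk : (s.equivFin.symm k : β) ∈ univ.image f.1 := by rw [f.2]; exact Subtype.prop _
      obtain ⟨i, -, hi⟩ := mem_image.1 hk
      exact ⟨i, by simp [hi]⟩⟩
  invFun τ := ⟨fun i => s.equivFin.symm (τ.1 i), by
    ext b
    refine ⟨fun hb => ?_, fun hb => ?_⟩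
    · obtain ⟨i, -, rfl⟩ := mem_image.1 hb
      exact Subtype.prop _
    · obtain ⟨i, hi⟩ := τ.2 (s.equivFin ⟨b, hb⟩)
      exact mem_image.2 ⟨i, mem_univ i, by simp [hi]⟩⟩
  left_inv f := by ext; simp
  right_inv τ := by ext; simp

theorem card_filter_image_eq [DecidableEq ι] [Fintype β] (s : Finset β) :
    #{f : ι → β | univ.image f = s} = Fintype.card {τ : ι → Fin #s // Surjective τ} := by
  rw [← Fintype.card_subtype]
  exact Fintype.card_congr (imageEqEquivSurjective s)

theorem card_filter_card_image_eq [DecidableEq ι] [Fintype β] (j : ℕ) :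
    #{f : ι → β | #(univ.image f) = j} =
      (Fintype.card β).choose j * Fintype.card {τ : ι → Fin j // Surjective τ} := by
  rw [card_eq_sum_card_fiberwise (f := fun f => univ.image f) (t := powersetCard j univ)
    fun f hf => mem_powersetCard.2 ⟨subset_univ _, (mem_filter.1 hf).2⟩]
  rw [← card_univ, ← card_powersetCard, ← smul_eq_mul, ← sum_const]
  refine sum_congr rfl fun s hs => ?_
  obtain ⟨-, rfl⟩ := mem_powersetCard.1 hs
  rw [filter_filter, ← card_filter_image_eq]
  congr 1
  exact filter_congr fun f _ => ⟨And.right, fun h => ⟨h ▸ rfl, h⟩⟩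

theorem card_image_univ_eq_iff_injective (f : ι → β) :
    #(univ.image f) = Fintype.card ι ↔ Injective f := by
  rw [← card_univ, card_image_iff, coe_univ, Set.injOn_univ]

theorem card_filter_not_injective [DecidableEq ι] [Fintype β] :
    #{f : ι → β | ¬ Injective f} = ∑ j ∈ Icc 1 (Fintype.card ι - 1),
      (Fintype.card β).choose j * Fintype.card {τ : ι → Fin j // Surjective τ} := by
  have hmaps : ∀ f ∈ ({f : ι → β | ¬ Injective f} : Finset _),
      #(univ.image f) ∈ Icc 1 (Fintype.card ι - 1) := by
    intro f hf
    have hf : ¬ Injective f := (mem_filter.1 hf).2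
    obtain ⟨a, -, -⟩ : ∃ a b, f a = f b ∧ a ≠ b := by
      simpa [Injective] using hf
    have hle : #(univ.image f) ≤ Fintype.card ι := card_image_le
    have hne := mt (card_image_univ_eq_iff_injective f).1 hf
    exact mem_Icc.2 ⟨card_pos.2 ⟨f a, mem_image_of_mem f (mem_univ a)⟩, by omega⟩
  rw [card_eq_sum_card_fiberwise hmaps]
  refine sum_congr rfl fun j hj => ?_
  have hj : j < Fintype.card ι := by have := mem_Icc.1 hj; omega
  rw [filter_filter, ← card_filter_card_image_eq]
  congr 1
  exact filter_congr fun f _ => ⟨And.right, fun h =>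
    ⟨fun hf => hj.ne (h ▸ (card_image_univ_eq_iff_injective f).2 hf), h⟩⟩

end Counting

theorem mem_monoTuples {k n : ℕ} {m : Fin k → Fin n} :
    m ∈ monoTuples k n ↔ StrictMono m := by
  simp [monoTuples]

theorem sum_filter_injective_eq_factorial_smul {k n : ℕ} {M : Type*} [AddCommMonoid M]
    (F : (Fin k → Fin n) → M) (hF : ∀ f (π : Equiv.Perm (Fin k)), F (f ∘ π) = F f) :
    ∑ f with Injective f, F f = k ! • ∑ m ∈ monoTuples k n, F m := by
  calc ∑ f with Injective f, F f
      = ∑ p ∈ monoTuples k n ×ˢ (univ : Finset (Equiv.Perm (Fin k))), F (p.1 ∘ p.2) := by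
        refine (sum_bij (fun p _ => p.1 ∘ p.2) ?_ ?_ ?_ fun _ _ => rfl).symm
        · rintro ⟨m, π⟩ hp
          simp only [mem_product, mem_monoTuples] at hp
          exact mem_filter.2 ⟨mem_univ _, hp.1.injective.comp π.injective⟩
        · rintro ⟨m, π⟩ hp ⟨m', π'⟩ hp' h
          simp only [mem_product, mem_monoTuples] at hp hp'
          have hm : m = m' := (hp.1.range_inj hp'.1).1 <| by
            rw [← EquivLike.range_comp m π, ← EquivLike.range_comp m' π']
            exact congrArg Set.range h
          subst hm
          exact Prod.ext rfl (Equiv.ext fun a => hp.1.injective (congrFun h a))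
        · intro f hf
          refine ⟨(f ∘ Tuple.sort f, (Tuple.sort f)⁻¹), mem_product.2 ⟨mem_monoTuples.2 <|
            (Tuple.monotone_sort f).strictMono_of_injective <|
              (mem_filter.1 hf).2.comp (Tuple.sort f).injective, mem_univ _⟩, ?_⟩
          ext a
          simp
    _ = ∑ m ∈ monoTuples k n, ∑ π : Equiv.Perm (Fin k), F (m ∘ π) := sum_product _ _ _
    _ = k ! • ∑ m ∈ monoTuples k n, F m := by
        simp only [hF, sum_const, card_univ, Fintype.card_perm, Fintype.card_fin, smul_sum]

theorem sum_eq_mul_average_monoTuples_add_sum_not_injective {k n : ℕ} (hkn : k ≤ n)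
    (F : (Fin k → Fin n) → ℝ) (hF : ∀ f (π : Equiv.Perm (Fin k)), F (f ∘ π) = F f) :
    ∑ i, F i =
      (k ! * n.choose k : ℝ) * ((n.choose k : ℝ)⁻¹ * ∑ m ∈ monoTuples k n, F m) +
        ∑ i with ¬ Injective i, F i := by
  have hchoose : (n.choose k : ℝ) ≠ 0 := by exact_mod_cast (Nat.choose_pos hkn).ne'
  rw [← sum_filter_add_sum_filter_not univ Injective, sum_filter_injective_eq_factorial_smul F hF,
    nsmul_eq_mul, mul_assoc, mul_inv_cancel_left₀ hchoose]

theorem inv_pow_mul_card_filter_not_injective (D n : ℕ) :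
    ((n : ℝ) ^ D)⁻¹ * #{i : Fin D → Fin n | ¬ Injective i} = ∑ j ∈ Icc 1 (D - 1),
      ((n : ℝ) ^ D)⁻¹ * Fintype.card {τ : Fin D → Fin j // Surjective τ} * n.choose j := by
  rw [card_filter_not_injective]
  simp only [Fintype.card_fin]
  push_cast
  rw [mul_sum]
  exact sum_congr rfl fun j _ => by ring

theorem mul_sum_mem_Icc {ι : Type*} (s : Finset ι) {c B : ℝ} (hc : 0 ≤ c) {f : ι → ℝ}
    (hf : ∀ i ∈ s, f i ∈ Set.Icc 0 B) :
    c * ∑ i ∈ s, f i ∈ Set.Icc 0 (c * (#s * B)) := by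
  refine ⟨mul_nonneg hc (sum_nonneg fun i hi => (hf i hi).1), mul_le_mul_of_nonneg_left ?_ hc⟩
  simpa using sum_le_card_nsmul s f B fun i hi => (hf i hi).2

section Deviation

variable {α : Type*} [MeasurableSpace α] {μ : Measure α}

theorem abs_sub_integral_le_of_mem_Icc [IsProbabilityMeasure μ] {f : α → ℝ} {a b : ℝ}
    (hf : Measurable f) (hab : ∀ x, f x ∈ Set.Icc a b) (x : α) :
    |f x - ∫ y, f y ∂μ| ≤ b - a := by
  have hint : Integrable f μ := .of_mem_Icc a b hf.aemeasurable (ae_of_all _ hab)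
  have ha : a ≤ ∫ y, f y ∂μ := by
    simpa using integral_mono (integrable_const a) hint fun y => (hab y).1
  have hb : ∫ y, f y ∂μ ≤ b := by
    simpa using integral_mono hint (integrable_const b) fun y => (hab y).2
  rw [abs_le]
  constructor <;> linarith [(hab x).1, (hab x).2]

theorem abs_sub_integral_le_of_eq_mul_add {V U R : α → ℝ} {c : ℝ} (hc : 0 ≤ c)
    (hU : Integrable U μ) (hR : Integrable R μ) (hV : ∀ x, V x = c * U x + R x) (x : α) :
    |V x - ∫ y, V y ∂μ| ≤ c * |U x - ∫ y, U y ∂μ| + |R x - ∫ y, R y ∂μ| := by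
  have hVint : ∫ y, V y ∂μ = c * ∫ y, U y ∂μ + ∫ y, R y ∂μ := by
    simp_rw [hV]
    rw [integral_add (hU.const_mul c) hR, integral_const_mul]
  calc |V x - ∫ y, V y ∂μ| = |c * (U x - ∫ y, U y ∂μ) + (R x - ∫ y, R y ∂μ)| := by
        rw [hV, hVint]; congr 1; ring
    _ ≤ c * |U x - ∫ y, U y ∂μ| + |R x - ∫ y, R y ∂μ| :=
        (abs_add_le _ _).trans_eq (by rw [abs_mul, abs_of_nonneg hc])

theorem iSup_abs_sub_integral_le {G : Type*} [Nonempty G] [IsProbabilityMeasure μ]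
    {V U R : G → α → ℝ} {c a b M : ℝ} (hc : 0 ≤ c)
    (hUm : ∀ g, Measurable (U g)) (hRm : ∀ g, Measurable (R g))
    (hU : ∀ g x, U g x ∈ Set.Icc a b) (hR : ∀ g x, R g x ∈ Set.Icc 0 M)
    (hV : ∀ g x, V g x = c * U g x + R g x) (x : α) :
    (⨆ g, |V g x - ∫ y, V g y ∂μ|) ≤ c * (⨆ g, |U g x - ∫ y, U g y ∂μ|) + M := by
  have hUbdd : BddAbove (Set.range fun g => |U g x - ∫ y, U g y ∂μ|) :=
    ⟨b - a, Set.forall_mem_range.2 fun g =>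
      abs_sub_integral_le_of_mem_Icc (μ := μ) (hUm g) (hU g) x⟩
  refine ciSup_le fun g => (abs_sub_integral_le_of_eq_mul_add (μ := μ) hc
    (.of_mem_Icc a b (hUm g).aemeasurable (ae_of_all _ (hU g)))
    (.of_mem_Icc 0 M (hRm g).aemeasurable (ae_of_all _ (hR g))) (hV g) x).trans ?_
  exact add_le_add (mul_le_mul_of_nonneg_left (le_ciSup hUbdd g) hc)
    (by simpa using abs_sub_integral_le_of_mem_Icc (μ := μ) (hRm g) (hR g) x)

end Deviation

theorem stmt8_general (D n : ℕ) (hn : D ≤ n)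
    {G : Type*} [Nonempty G]
    (Bl : ℝ) (ℓt : G → (Fin D → (Fin D → ℝ)) → ℝ)
    (hmeas : ∀ g, Measurable (ℓt g))
    (hbdd : ∀ g t, ℓt g t ∈ Set.Icc (0 : ℝ) Bl)
    (hsym : ∀ (g : G) (t : Fin D → (Fin D → ℝ)) (π : Equiv.Perm (Fin D)),
      ℓt g (t ∘ π) = ℓt g t)
    (q : Measure (Fin D → ℝ)) [IsProbabilityMeasure q]
    (V U : G → (Fin n → Fin D → ℝ) → ℝ)
    (hV : ∀ g S, V g S = ((n : ℝ) ^ D)⁻¹ *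
      ∑ i : Fin D → Fin n, ℓt g fun a => S (i a))
    (hU : ∀ g S, U g S = ((n.choose D : ℕ) : ℝ)⁻¹ *
      ∑ i ∈ monoTuples D n, ℓt g fun a => S (i a))
    (w : ℕ → ℝ)
    (hw : ∀ j : ℕ, w j = ((n : ℝ) ^ D)⁻¹ *
      (Fintype.card {τ : Fin D → Fin j // Function.Surjective τ} : ℝ) * (n.choose j : ℝ))
    (S : Fin n → Fin D → ℝ) :
    (⨆ g : G, |V g S - ∫ S', V g S' ∂(Measure.pi fun _ : Fin n => q)|) ≤
      w D * (⨆ g : G, |U g S - ∫ S', U g S' ∂(Measure.pi fun _ : Fin n => q)|) +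
        2 * Bl * ∑ j ∈ Finset.Icc 1 (D - 1), w j := by
  set R : G → (Fin n → Fin D → ℝ) → ℝ := fun g S' =>
    ((n : ℝ) ^ D)⁻¹ * ∑ i with ¬ Injective i, ℓt g fun a => S' (i a)
  have hterm : ∀ g (i : Fin D → Fin n),
      Measurable fun S' : Fin n → Fin D → ℝ => ℓt g fun a => S' (i a) :=
    fun g i => (hmeas g).comp (by fun_prop)
  have hUm : ∀ g, Measurable (U g) := fun g => by
    rw [funext (hU g)]
    exact (Finset.measurable_sum _ fun i _ => hterm g i).const_mul _
  have hRm : ∀ g, Measurable (R g) := fun g =>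
    (Finset.measurable_sum _ fun i _ => hterm g i).const_mul _
  have hUmem :
      ∀ g S', U g S' ∈ Set.Icc 0 ((n.choose D : ℝ)⁻¹ * (#(monoTuples D n) * Bl)) :=
    fun g S' => hU g S' ▸ mul_sum_mem_Icc _ (by positivity) fun i _ => hbdd g _
  have hRmem : ∀ g S', R g S' ∈ Set.Icc 0 (Bl * ∑ j ∈ Finset.Icc 1 (D - 1), w j) := by
    have hM : ((n : ℝ) ^ D)⁻¹ * (#{i : Fin D → Fin n | ¬ Injective i} * Bl) =
        Bl * ∑ j ∈ Finset.Icc 1 (D - 1), w j := by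
      rw [← mul_assoc, inv_pow_mul_card_filter_not_injective, mul_comm]
      simp only [hw]
    exact fun g S' => hM ▸ mul_sum_mem_Icc _ (by positivity) fun i _ => hbdd g _
  have hdecomp : ∀ g S', V g S' = w D * U g S' + R g S' := fun g S' => by
    rw [hV, hU, hw, card_surjective_self, Fintype.card_fin,
      sum_eq_mul_average_monoTuples_add_sum_not_injective hn _
        fun f π => hsym g (fun a => S' (f a)) π]
    ring
  have hM0 := (hRmem (Classical.arbitrary G) S).1.trans (hRmem (Classical.arbitrary G) S).2
  refine (iSup_abs_sub_integral_le (by rw [hw]; positivity) hUm hRm hUmem hRmem hdecomp S).trans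
    (add_le_add le_rfl ?_)
  linarith

/-- For a family of symmetric kernels bounded in `[0, B_ℓ]`, the uniform deviation of the
V-statistic is bounded by `w_D` times the uniform deviation of the degree-`D` U-statistic
plus `2 B_ℓ Σ_{j=1}^{D-1} w_j`, where `w_j = n^{-D} |𝔊_j^D| C(n,j)`. -/
theorem stmt8 (D n : ℕ) (hD : 1 ≤ D) (hn : D ≤ n)
    {G : Type*} [Nonempty G]
    (Bl : ℝ) (ℓt : G → (Fin D → (Fin D → ℝ)) → ℝ)
    (hmeas : ∀ g, Measurable (ℓt g))
    (hbdd : ∀ g t, ℓt g t ∈ Set.Icc (0 : ℝ) Bl)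
    (hsym : ∀ (g : G) (t : Fin D → (Fin D → ℝ)) (π : Equiv.Perm (Fin D)),
      ℓt g (t ∘ π) = ℓt g t)
    (q : Measure (Fin D → ℝ)) [IsProbabilityMeasure q]
    (V U : G → (Fin n → Fin D → ℝ) → ℝ)
    (hV : ∀ g S, V g S = ((n : ℝ) ^ D)⁻¹ *
      ∑ i : Fin D → Fin n, ℓt g fun a => S (i a))
    (hU : ∀ g S, U g S = ((n.choose D : ℕ) : ℝ)⁻¹ *
      ∑ i ∈ monoTuples D n, ℓt g fun a => S (i a))
    (w : ℕ → ℝ)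
    (hw : ∀ j : ℕ, w j = ((n : ℝ) ^ D)⁻¹ *
      (Fintype.card {τ : Fin D → Fin j // Function.Surjective τ} : ℝ) * (n.choose j : ℝ))
    (S : Fin n → Fin D → ℝ) :
    (⨆ g : G, |V g S - ∫ S', V g S' ∂(Measure.pi fun _ : Fin n => q)|) ≤
      w D * (⨆ g : G, |U g S - ∫ S', U g S' ∂(Measure.pi fun _ : Fin n => q)|) +
        2 * Bl * ∑ j ∈ Finset.Icc 1 (D - 1), w j :=
  stmt8_general D n hn Bl ℓt hmeas hbdd hsym q V U hV hU w hw S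
end

section
/- Let D ≥ 1, let ℓ: ℝ^D → [0, B_ℓ] be a bounded measurable loss, let f, f̂: ℝ^D → ℝ^D be measurable maps, let q be a factorized probability density on ℝ^D and q̌ any probability density on ℝ^D. Define R = ∫ ℓ(f(s)) q(s) ds and the symmetrized kernel ℓ̃(s₁,…,s_D) = (1/D!) Σ_{π ∈ 𝔖_D} ℓ(f̂(s_{π(1)}^{(1)}, …, s_{π(D)}^{(D)})). Then R − ∫ ℓ̃(s₁,…,s_D) Π_{i=1}^D q̌(s_i) ds₁⋯ds_D ≤ ∫ |ℓ(f(s)) − ℓ(f̂(s))| q(s) ds + D · B_ℓ · ∫ |q(s) − q̌(s)| ds. -/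
/-!
Replacing `ℓ ∘ f` by `ℓ ∘ f̂` under `q` costs the first term. Since `q` is factorized, the
diagonal `(t₁⁽¹⁾, …, t_D⁽ᴰ⁾)` of `D` independent samples from `q` is again `q`-distributed, so the
risk of `f̂` is the integral of `ℓ ∘ f̂ ∘ diag` against `q^{⊗D}`; and since `q̌^{⊗D}` is invariant
under permuting the samples, the symmetrized kernel has the same `q̌^{⊗D}`-integral as
`ℓ ∘ f̂ ∘ diag`. Swapping `q` for `q̌` one factor at a time changes a product density by at most
`∫ |q - q̌|` in `L¹`, so `‖q^{⊗D} - q̌^{⊗D}‖₁ ≤ D ∫ |q - q̌|`, and `0 ≤ ℓ ≤ B_ℓ` gives the second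
term.
-/

open MeasureTheory

section IntegralEstimates

variable {α : Type*} [MeasurableSpace α] {μ : Measure α}

theorem integral_mul_sub_integral_mul_le_integral_abs_sub_mul {u v q : α → ℝ} {C : ℝ}
    (hu : AEStronglyMeasurable u μ) (hv : AEStronglyMeasurable v μ) (huC : ∀ x, |u x| ≤ C)
    (hvC : ∀ x, |v x| ≤ C) (hq : Integrable q μ) (hq0 : ∀ x, 0 ≤ q x) :
    ∫ x, u x * q x ∂μ - ∫ x, v x * q x ∂μ ≤ ∫ x, |u x - v x| * q x ∂μ := by
  have huq := hq.bdd_mul hu (ae_of_all _ huC)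
  have hvq := hq.bdd_mul hv (ae_of_all _ hvC)
  have habs : ∀ x, |u x - v x| * q x = |u x * q x - v x * q x| := fun x => by
    rw [← sub_mul, abs_mul, abs_of_nonneg (hq0 x)]
  rw [← integral_sub huq hvq]
  refine integral_mono (huq.sub hvq) ((huq.sub hvq).abs.congr (ae_of_all _ fun x => (habs x).symm))
    fun x => ?_
  simp only [habs]
  exact le_abs_self _

theorem integral_mul_sub_integral_mul_le_mul_integral_abs_sub {g u v : α → ℝ} {B : ℝ}
    (hg : AEStronglyMeasurable g μ) (hgB : ∀ x, |g x| ≤ B) (hu : Integrable u μ)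
    (hv : Integrable v μ) :
    ∫ x, g x * u x ∂μ - ∫ x, g x * v x ∂μ ≤ B * ∫ x, |u x - v x| ∂μ := by
  have hgu := hu.bdd_mul hg (ae_of_all _ hgB)
  have hgv := hv.bdd_mul hg (ae_of_all _ hgB)
  rw [← integral_sub hgu hgv, ← integral_const_mul]
  refine integral_mono (hgu.sub hgv) ((hu.sub hv).abs.const_mul B) fun x => ?_
  calc g x * u x - g x * v x ≤ |g x| * |u x - v x| := by
        rw [← mul_sub, ← abs_mul]; exact le_abs_self _
    _ ≤ B * |u x - v x| := mul_le_mul_of_nonneg_right (hgB x) (abs_nonneg _)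

theorem integral_abs_sub_le_add {f g h : α → ℝ} (hf : Integrable f μ) (hg : Integrable g μ)
    (hh : Integrable h μ) :
    ∫ x, |f x - h x| ∂μ ≤ ∫ x, |f x - g x| ∂μ + ∫ x, |g x - h x| ∂μ := by
  have hfg : Integrable (fun x => |f x - g x|) μ := (hf.sub hg).abs
  have hgh : Integrable (fun x => |g x - h x|) μ := (hg.sub hh).abs
  rw [← integral_add hfg hgh]
  exact integral_mono (hf.sub hh).abs (hfg.add hgh) fun x => abs_sub_le _ _ _

end IntegralEstimates

theorem abs_prod_update_sub_prod_update {ι X : Type*} [Fintype ι] [DecidableEq ι]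
    (c : ι → X → ℝ) (j : ι) (a b : X → ℝ) (x : ι → X) (hc : ∀ i, i ≠ j → 0 ≤ c i (x i)) :
    |∏ i, Function.update c j a i (x i) - ∏ i, Function.update c j b i (x i)|
      = ∏ i, Function.update c j (fun y => |a y - b y|) i (x i) := by
  have hrest : ∀ h : X → ℝ, ∏ i ∈ {j}ᶜ, Function.update c j h i (x i) = ∏ i ∈ {j}ᶜ, c i (x i) :=
    fun h => Finset.prod_congr rfl fun i hi => by
      rw [Function.update_of_ne (by simpa using hi)]
  simp only [Fintype.prod_eq_mul_prod_compl j, hrest, Function.update_self, ← sub_mul, abs_mul]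
  rw [abs_of_nonneg (Finset.prod_nonneg fun i hi => hc i (by simpa using hi))]

section Pi

variable {ι κ X : Type*} [Fintype ι] [Fintype κ] [MeasureSpace X]
  [SigmaFinite (volume : Measure X)]

theorem volume_measurePreserving_curry :
    MeasurePreserving (MeasurableEquiv.curry ι κ X) volume volume := by
  refine MeasurePreserving.symm (MeasurableEquiv.curry ι κ X).symm
    ⟨MeasurableEquiv.measurable _, (Measure.pi_eq fun s _ => ?_).symm⟩
  have hpre : (MeasurableEquiv.curry ι κ X).symm ⁻¹' Set.univ.pi s
      = Set.univ.pi fun i => Set.univ.pi fun k => s (i, k) := by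
    ext t
    simp [MeasurableEquiv.coe_curry_symm]
  rw [MeasurableEquiv.map_apply, hpre, volume_pi_pi]
  simp_rw [volume_pi_pi]
  exact (Fintype.prod_prod_type fun z => volume (s z)).symm

theorem integral_comp_piCongrLeft (e : κ ≃ ι) (F : (ι → X) → ℝ) :
    ∫ y : κ → X, F (fun i => y (e.symm i)) = ∫ x : ι → X, F x := by
  rw [← (volume_measurePreserving_piCongrLeft (fun _ => X) e).integral_comp']
  congr 2 with y
  congr 1 with i
  simp [MeasurableEquiv.coe_piCongrLeft, Equiv.piCongrLeft_apply_eq_cast]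

theorem integrable_comp_piCongrLeft (e : κ ≃ ι) {F : (ι → X) → ℝ} (hF : Integrable F) :
    Integrable fun y : κ → X => F (fun i => y (e.symm i)) := by
  convert (volume_measurePreserving_piCongrLeft (fun _ => X) e).integrable_comp_of_integrable hF
    using 1
  ext y
  simp only [Function.comp_apply, MeasurableEquiv.coe_piCongrLeft]
  congr 1 with i
  simp [Equiv.piCongrLeft_apply_eq_cast]

theorem integral_prod_apply_eq_one {κ : Type*} [Fintype κ] (f : κ → X → ℝ)
    (hf : ∀ k, ∫ x, f k x = 1) :
    ∫ x : κ → X, ∏ k, f k (x k) = 1 := by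
  rw [integral_fintype_prod_volume_eq_prod]
  exact Finset.prod_eq_one fun k _ => hf k

theorem integral_comp_subtype_mul_prod (p : ι → Prop) [DecidablePred p]
    (g : ({i // p i} → X) → ℝ) (f : ι → X → ℝ) (hf : ∀ i, ¬ p i → ∫ x, f i x = 1) :
    ∫ x : ι → X, g (fun i => x i) * ∏ i, f i (x i)
      = ∫ v : {i // p i} → X, g v * ∏ i : {i // p i}, f i (v i) := by
  have hoff : ∫ w : {i // ¬ p i} → X, ∏ i : {i // ¬ p i}, f i (w i) = 1 :=
    integral_prod_apply_eq_one (fun i : {i // ¬ p i} => f i) fun i => hf i i.2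
  let G : ({i // p i} → X) → ℝ := fun v => g v * ∏ i : {i // p i}, f i (v i)
  let H : ({i // ¬ p i} → X) → ℝ := fun w => ∏ i : {i // ¬ p i}, f i (w i)
  calc ∫ x : ι → X, g (fun i => x i) * ∏ i, f i (x i)
      = ∫ x : ι → X, G (fun i => x i) * H (fun i => x i) := by
        refine integral_congr_ae (ae_of_all _ fun x => ?_)
        simp only [G, H, mul_assoc, Fintype.prod_subtype_mul_prod_subtype p fun i => f i (x i)]
    _ = ∫ vw : ({i // p i} → X) × ({i // ¬ p i} → X), G vw.1 * H vw.2 :=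
        (volume_preserving_piEquivPiSubtypeProd (fun _ => X) p).integral_comp'
          (fun vw => G vw.1 * H vw.2)
    _ = ∫ v : {i // p i} → X, G v := by
        rw [Measure.volume_eq_prod, integral_prod_mul G H, hoff, mul_one]

theorem integral_comp_embedding_mul_prod (e : κ ↪ ι) (g : (κ → X) → ℝ) (f : ι → X → ℝ)
    (hf : ∀ i, i ∉ Set.range e → ∫ x, f i x = 1) :
    ∫ x : ι → X, g (fun k => x (e k)) * ∏ i, f i (x i)
      = ∫ y : κ → X, g y * ∏ k, f (e k) (y k) := by
  classical
  let e' : κ ≃ {i // ∃ k, e k = i} := Equiv.ofInjective e e.injective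
  refine (integral_comp_subtype_mul_prod (fun i => ∃ k, e k = i) (fun v => g fun k => v (e' k)) f
    hf).trans ?_
  refine (integral_comp_piCongrLeft (X := X) e' _).symm.trans
    (integral_congr_ae (ae_of_all _ fun y => ?_))
  simp only [Equiv.symm_apply_apply]
  rw [← e'.prod_comp]
  simp only [Equiv.symm_apply_apply]
  rfl

theorem integral_comp_diag_mul_prod_prod (g : (κ → X) → ℝ) (f : κ → X → ℝ)
    (hf : ∀ k, ∫ x, f k x = 1) :
    ∫ t : κ → κ → X, g (fun k => t k k) * ∏ i, ∏ k, f k (t i k)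
      = ∫ s : κ → X, g s * ∏ k, f k (s k) := by
  let diag : κ ↪ κ × κ := ⟨fun k => (k, k), fun _ _ h => congrArg Prod.fst h⟩
  rw [← volume_measurePreserving_curry.integral_comp']
  simp only [MeasurableEquiv.coe_curry, Function.curry_apply]
  simp_rw [← Fintype.prod_prod_type']
  exact integral_comp_embedding_mul_prod diag g (fun z => f z.2) fun z _ => hf z.2

theorem integral_average_perm_mul [DecidableEq ι] (H W : (ι → X) → ℝ)
    (hW : ∀ (σ : Equiv.Perm ι) t, W (fun i => t (σ i)) = W t)
    (hHW : Integrable fun t => H t * W t) :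
    ∫ t : ι → X, ((Fintype.card ι).factorial : ℝ)⁻¹ * (∑ σ : Equiv.Perm ι, H (fun i => t (σ i)))
        * W t
      = ∫ t, H t * W t := by
  have hint : ∀ σ : Equiv.Perm ι, Integrable fun t : ι → X => H (fun i => t (σ i)) * W t :=
    fun σ => by simpa [hW] using integrable_comp_piCongrLeft σ.symm hHW
  have hperm : ∀ σ : Equiv.Perm ι, ∫ t : ι → X, H (fun i => t (σ i)) * W t = ∫ t, H t * W t :=
    fun σ => by simpa [hW] using integral_comp_piCongrLeft σ.symm fun t => H t * W t
  simp_rw [mul_assoc, Finset.sum_mul]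
  rw [integral_const_mul, integral_finsetSum _ fun σ _ => hint σ,
    Finset.sum_congr rfl fun σ _ => hperm σ, Finset.sum_const, Finset.card_univ,
    Fintype.card_perm, nsmul_eq_mul, inv_mul_cancel_left₀ (by positivity)]

theorem integral_prod_update [DecidableEq ι] (c : ι → X → ℝ) (j : ι) (h : X → ℝ)
    (hc : ∀ i, i ≠ j → ∫ x, c i x = 1) :
    ∫ x : ι → X, ∏ i, Function.update c j h i (x i) = ∫ x, h x := by
  rw [integral_fintype_prod_volume_eq_prod, Fintype.prod_eq_single j fun i hi => by
    rw [Function.update_of_ne hi, hc i hi], Function.update_self]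

theorem integral_abs_prod_update_sub_prod_update [DecidableEq ι] (c : ι → X → ℝ) (j : ι)
    (a b : X → ℝ) (hc0 : ∀ i, i ≠ j → ∀ x, 0 ≤ c i x) (hc1 : ∀ i, i ≠ j → ∫ x, c i x = 1) :
    ∫ x : ι → X, |∏ i, Function.update c j a i (x i) - ∏ i, Function.update c j b i (x i)|
      = ∫ x, |a x - b x| := by
  simp_rw [abs_prod_update_sub_prod_update c j a b _ fun i hi => hc0 i hi _]
  exact integral_prod_update c j _ hc1

theorem integral_abs_prod_sub_prod_le (P R : ι → X → ℝ) (hP0 : ∀ i x, 0 ≤ P i x)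
    (hR0 : ∀ i x, 0 ≤ R i x) (hP1 : ∀ i, ∫ x, P i x = 1) (hR1 : ∀ i, ∫ x, R i x = 1) :
    ∫ x : ι → X, |∏ i, P i (x i) - ∏ i, R i (x i)| ≤ ∑ i, ∫ y, |P i y - R i y| := by
  classical
  have hpw0 : ∀ (s : Finset ι) i x, 0 ≤ s.piecewise R P i x := fun s i x =>
    s.piecewise_cases R P (fun f : X → ℝ => 0 ≤ f x) (hR0 i x) (hP0 i x)
  have hpw1 : ∀ (s : Finset ι) i, ∫ x, s.piecewise R P i x = 1 := fun s i =>
    s.piecewise_cases R P (fun f : X → ℝ => ∫ x, f x = 1) (hR1 i) (hP1 i)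
  have hint : ∀ s : Finset ι, Integrable fun x : ι → X => ∏ i, s.piecewise R P i (x i) :=
    fun s => Integrable.fintype_prod fun i => .of_integral_ne_zero (by simp [hpw1 s i])
  suffices key : ∀ s : Finset ι, ∫ x : ι → X, |∏ i, P i (x i) - ∏ i, s.piecewise R P i (x i)|
      ≤ ∑ i ∈ s, ∫ y, |P i y - R i y| by
    simpa using key Finset.univ
  intro s
  induction s using Finset.induction_on with
  | empty => simp
  | insert j s hj ih =>
    have hstep : ∫ x : ι → X,
        |∏ i, s.piecewise R P i (x i) - ∏ i, (insert j s).piecewise R P i (x i)|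
          = ∫ y, |P j y - R j y| := by
      have hPj : s.piecewise R P = Function.update (s.piecewise R P) j (P j) := by
        rw [← Finset.piecewise_eq_of_notMem s R P hj, Function.update_eq_self]
      rw [Finset.piecewise_insert, hPj, Function.update_idem]
      exact integral_abs_prod_update_sub_prod_update _ j _ _ (fun i _ => hpw0 s i)
        (fun i _ => hpw1 s i)
    have hP : Integrable fun x : ι → X => ∏ i, P i (x i) := by
      simpa using hint ∅
    calc ∫ x : ι → X, |∏ i, P i (x i) - ∏ i, (insert j s).piecewise R P i (x i)|
        ≤ (∫ x : ι → X, |∏ i, P i (x i) - ∏ i, s.piecewise R P i (x i)|)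
            + ∫ y, |P j y - R j y| :=
          hstep ▸ integral_abs_sub_le_add hP (hint s) (hint _)
      _ ≤ ∑ i ∈ insert j s, ∫ y, |P i y - R i y| := by
          rw [Finset.sum_insert hj, add_comm]
          gcongr

end Pi

theorem stmt10_general (D : ℕ) (Bl : ℝ)
    (ℓ : (Fin D → ℝ) → ℝ) (hℓm : Measurable ℓ) (hℓb : ∀ z, ℓ z ∈ Set.Icc (0 : ℝ) Bl)
    (f fhat : (Fin D → ℝ) → (Fin D → ℝ)) (hfm : Measurable f) (hfhm : Measurable fhat)
    (qd : Fin D → ℝ → ℝ) (hqd0 : ∀ d x, 0 ≤ qd d x)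
    (hqd1 : ∀ d, ∫ x, qd d x = 1)
    (q : (Fin D → ℝ) → ℝ) (hq : ∀ s, q s = ∏ d, qd d (s d))
    (qc : (Fin D → ℝ) → ℝ) (hqc0 : ∀ s, 0 ≤ qc s)
    (hqc1 : ∫ s, qc s = 1)
    (ℓt : (Fin D → (Fin D → ℝ)) → ℝ)
    (hℓt : ∀ t, ℓt t = ((D.factorial : ℕ) : ℝ)⁻¹ *
      ∑ π : Equiv.Perm (Fin D), ℓ (fhat fun d => t (π d) d)) :
    (∫ s, ℓ (f s) * q s) -
        (∫ t : Fin D → (Fin D → ℝ), ℓt t * ∏ i, qc (t i)) ≤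
      (∫ s, |ℓ (f s) - ℓ (fhat s)| * q s) + D * Bl * ∫ s, |q s - qc s| := by
  have hBl : 0 ≤ Bl := (hℓb 0).1.trans (hℓb 0).2
  have hℓB : ∀ z, |ℓ z| ≤ Bl := fun z => abs_le.mpr ⟨by linarith [(hℓb z).1], (hℓb z).2⟩
  have hq0 : ∀ s, 0 ≤ q s := fun s => (hq s).symm ▸ Finset.prod_nonneg fun d _ => hqd0 d (s d)
  have hq1 : ∫ s, q s = 1 := by simpa [← hq] using integral_prod_apply_eq_one qd hqd1
  have hIq : Integrable q := .of_integral_ne_zero (by simp [hq1])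
  have hIqc : Integrable qc := .of_integral_ne_zero (by simp [hqc1])
  set G : (Fin D → Fin D → ℝ) → ℝ := fun t => ℓ (fhat fun d => t d d)
  have hG : Measurable G := hℓm.comp (hfhm.comp (measurable_pi_lambda _ fun d =>
    (measurable_pi_apply d).comp (measurable_pi_apply d)))
  have hrisk : ∫ s, ℓ (fhat s) * q s = ∫ t, G t * ∏ i, q (t i) := by
    simp_rw [hq]
    exact (integral_comp_diag_mul_prod_prod _ qd hqd1).symm
  have hsymm : ∫ t, ℓt t * ∏ i, qc (t i) = ∫ t, G t * ∏ i, qc (t i) := by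
    simpa [hℓt] using integral_average_perm_mul G (fun t => ∏ i, qc (t i))
      (fun σ t => Equiv.prod_comp σ fun i => qc (t i))
      ((Integrable.fintype_prod fun _ => hIqc).bdd_mul hG.aestronglyMeasurable
        (ae_of_all _ fun t => hℓB _))
  have hloss := integral_mul_sub_integral_mul_le_integral_abs_sub_mul
    (hℓm.comp hfm).aestronglyMeasurable (hℓm.comp hfhm).aestronglyMeasurable
    (fun s => hℓB (f s)) (fun s => hℓB (fhat s)) hIq hq0
  have hmix := integral_mul_sub_integral_mul_le_mul_integral_abs_sub hG.aestronglyMeasurable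
    (fun t => hℓB _) (Integrable.fintype_prod fun _ => hIq)
    (Integrable.fintype_prod fun _ => hIqc)
  have htv := integral_abs_prod_sub_prod_le (ι := Fin D) (fun _ => q) (fun _ => qc)
    (fun _ => hq0) (fun _ => hqc0) (fun _ => hq1) (fun _ => hqc1)
  rw [Finset.sum_const, Finset.card_univ, Fintype.card_fin, nsmul_eq_mul] at htv
  calc (∫ s, ℓ (f s) * q s) - ∫ t, ℓt t * ∏ i, qc (t i)
      = ((∫ s, ℓ (f s) * q s) - ∫ s, ℓ (fhat s) * q s)
          + ((∫ t, G t * ∏ i, q (t i)) - ∫ t, G t * ∏ i, qc (t i)) := by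
        rw [hsymm, hrisk]; ring
    _ ≤ (∫ s, |ℓ (f s) - ℓ (fhat s)| * q s) + Bl * (D * ∫ s, |q s - qc s|) :=
        add_le_add hloss (hmix.trans (mul_le_mul_of_nonneg_left htv hBl))
    _ = (∫ s, |ℓ (f s) - ℓ (fhat s)| * q s) + D * Bl * ∫ s, |q s - qc s| := by ring

/-- Approximation bound: the risk `R = ∫ ℓ(f(s)) q(s) ds` minus the product-expectation of the
symmetrized kernel built from `f̂` and density `q̌` is at most the `q`-weighted `L¹` difference
of the losses plus `D · B_ℓ` times the `L¹` distance of the densities. -/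
theorem stmt10 (D : ℕ) (hD : 1 ≤ D) (Bl : ℝ)
    (ℓ : (Fin D → ℝ) → ℝ) (hℓm : Measurable ℓ) (hℓb : ∀ z, ℓ z ∈ Set.Icc (0 : ℝ) Bl)
    (f fhat : (Fin D → ℝ) → (Fin D → ℝ)) (hfm : Measurable f) (hfhm : Measurable fhat)
    (qd : Fin D → ℝ → ℝ) (hqdm : ∀ d, Measurable (qd d)) (hqd0 : ∀ d x, 0 ≤ qd d x)
    (hqd1 : ∀ d, ∫ x, qd d x = 1)
    (q : (Fin D → ℝ) → ℝ) (hq : ∀ s, q s = ∏ d, qd d (s d))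
    (qc : (Fin D → ℝ) → ℝ) (hqcm : Measurable qc) (hqc0 : ∀ s, 0 ≤ qc s)
    (hqc1 : ∫ s, qc s = 1)
    (ℓt : (Fin D → (Fin D → ℝ)) → ℝ)
    (hℓt : ∀ t, ℓt t = ((D.factorial : ℕ) : ℝ)⁻¹ *
      ∑ π : Equiv.Perm (Fin D), ℓ (fhat fun d => t (π d) d)) :
    (∫ s, ℓ (f s) * q s) -
        (∫ t : Fin D → (Fin D → ℝ), ℓt t * ∏ i, qc (t i)) ≤
      (∫ s, |ℓ (f s) - ℓ (fhat s)| * q s) + D * Bl * ∫ s, |q s - qc s| :=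
  stmt10_general D Bl ℓ hℓm hℓb f fhat hfm hfhm qd hqd0 hqd1 q hq qc hqc0 hqc1 ℓt hℓt
end

section
/- Let D ≥ 1 and let f, f̂: ℝ^D → ℝ^D be differentiable, with f a diffeomorphism whose inverse f⁻¹ is differentiable. Suppose all entries of the Jacobian of f are bounded in absolute value by B_∂f, all entries of the Jacobian of f⁻¹ are bounded in absolute value by B_∂f⁻¹, and for each j the gradient of the j-th component of f⁻¹ satisfies |∂f⁻¹_j/∂z_k(z) − ∂f⁻¹_j/∂z_k(z')| ≤ H_j ‖z − z'‖₂ for all k and all z, z' (Hölder-(1,1) condition with constant H_j). Then for every s ∈ ℝ^D, ‖D(f⁻¹∘f)(s) − D(f⁻¹∘f̂)(s)‖_op ≤ D^{3/2} B_∂f (Σ_{j=1}^D H_j) Σ_{j=1}^D |f_j(s) − f̂_j(s)| + D^{3/2} B_∂f⁻¹ Σ_{k=1}^D Σ_{j=1}^D |∂f_j/∂s_k(s) − ∂f̂_j/∂s_k(s)|, where ‖·‖_op is the operator norm induced by the Euclidean vector norm and D(·)(s) denotes the Jacobian matrix at s. -/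
/-- The Jacobian matrix of a map `F : ℝ^D → ℝ^D` at a point `s`, with entries
`(j,k) ↦ ∂F_j/∂s_k (s)`. -/
noncomputable def jmat {D : ℕ} (F : (Fin D → ℝ) → (Fin D → ℝ)) (s : Fin D → ℝ) :
    Matrix (Fin D) (Fin D) ℝ :=
  Matrix.of fun j k => fderiv ℝ F s (Pi.single k 1) j

/-- The operator norm of a real matrix induced by the Euclidean vector norm. -/
noncomputable def opNormR {D : ℕ} (M : Matrix (Fin D) (Fin D) ℝ) : ℝ :=
  ‖Matrix.toEuclideanCLM (𝕜 := ℝ) M‖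

/-!
Write `D(f⁻¹∘f)(s) = G A` and `D(f⁻¹∘f̂)(s) = Ĝ Â`, with `A, Â` the Jacobians of `f, f̂` at `s`
and `G, Ĝ` that of `f⁻¹` at `f s, f̂ s`. Then the difference is `(G - Ĝ) A + Ĝ (A - Â)`. The
Hölder condition bounds row `j` of `G - Ĝ` by `H_j ‖f s - f̂ s‖₂ ≤ H_j Σ_i |f_i s - f̂_i s|`, and
the entry bounds on `A` and `Ĝ` then bound the absolute column sums of both products. The
operator norm is at most `√D` times the largest absolute column sum.
-/

open Finset Matrix

open scoped Matrix.Norms.L2Operator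

section EuclideanNorm

variable {ι : Type*} [Fintype ι]

lemma Real.sqrt_sum_sq_le_sum_abs (a : ι → ℝ) : √(∑ i, a i ^ 2) ≤ ∑ i, |a i| := by
  rw [Real.sqrt_le_left (sum_nonneg fun i _ => abs_nonneg _)]
  simpa only [sq_abs] using sum_sq_le_sq_sum_of_nonneg (s := univ) fun i _ => abs_nonneg (a i)

lemma EuclideanSpace.norm_le_sum_abs (x : EuclideanSpace ℝ ι) : ‖x‖ ≤ ∑ i, |x i| := by
  simpa only [EuclideanSpace.norm_eq, Real.norm_eq_abs, sq_abs] using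
    Real.sqrt_sum_sq_le_sum_abs fun i => x i

lemma EuclideanSpace.sum_abs_le_sqrt_card_mul_norm (x : EuclideanSpace ℝ ι) :
    ∑ i, |x i| ≤ √(Fintype.card ι) * ‖x‖ := by
  rw [EuclideanSpace.norm_eq, ← Real.sqrt_mul (Nat.cast_nonneg _),
    Real.le_sqrt (sum_nonneg fun i _ => abs_nonneg _) (by positivity)]
  simpa only [Real.norm_eq_abs, sq_abs, card_univ] using
    sq_sum_le_card_mul_sum_sq (s := univ) (f := fun i => |x i|)

end EuclideanNorm

namespace Matrix

variable {l m n : Type*} [Fintype m]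

lemma sum_abs_mul_apply_le [Fintype l] (P : Matrix m l ℝ) (Q : Matrix l n ℝ) {p : m → l → ℝ}
    {q : l → n → ℝ} (hp : ∀ j i, |P j i| ≤ p j i) (hq : ∀ i k, |Q i k| ≤ q i k) (k : n) :
    ∑ j, |(P * Q) j k| ≤ ∑ j, ∑ i, p j i * q i k := by
  refine sum_le_sum fun j _ => (abs_sum_le_sum_abs _ _).trans (sum_le_sum fun i _ => ?_)
  rw [abs_mul]
  exact mul_le_mul (hp j i) (hq i k) (abs_nonneg _) ((abs_nonneg _).trans (hp j i))

lemma sum_abs_mul_apply_le_of_abs_le_of_abs_le [Fintype l] (P : Matrix m l ℝ) (Q : Matrix l n ℝ)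
    {p : m → ℝ} {b : ℝ} (hp : ∀ j i, |P j i| ≤ p j) (hq : ∀ i k, |Q i k| ≤ b) (k : n) :
    ∑ j, |(P * Q) j k| ≤ Fintype.card l * b * ∑ j, p j :=
  (sum_abs_mul_apply_le P Q hp hq k).trans_eq <| by
    simp only [sum_const, card_univ, nsmul_eq_mul, mul_sum]
    exact sum_congr rfl fun j _ => by ring

lemma sum_abs_mul_apply_le_of_abs_left_le [Fintype l] (P : Matrix m l ℝ) (Q : Matrix l n ℝ)
    {b : ℝ} (hp : ∀ j i, |P j i| ≤ b) (k : n) :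
    ∑ j, |(P * Q) j k| ≤ Fintype.card m * b * ∑ i, |Q i k| :=
  (sum_abs_mul_apply_le P Q hp (fun i k => le_rfl) k).trans_eq <| by
    simp only [← mul_sum, sum_const, card_univ, nsmul_eq_mul]
    ring

lemma l2_opNorm_le_sqrt_card_mul_of_sum_abs_le [Fintype n] [DecidableEq n] (N : Matrix m n ℝ)
    {C : ℝ} (hC : ∀ k, ∑ j, |N j k| ≤ C) : ‖N‖ ≤ √(Fintype.card n) * C := by
  rcases isEmpty_or_nonempty n with _ | ⟨⟨k₀⟩⟩
  · simp [Subsingleton.elim N 0]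
  have hC0 : 0 ≤ C := (sum_nonneg fun j _ => abs_nonneg _).trans (hC k₀)
  refine ContinuousLinearMap.opNorm_le_bound _ (by positivity) fun x => ?_
  calc ‖(toEuclideanLin ≪≫ₗ LinearMap.toContinuousLinearMap) N x‖
      ≤ ∑ j, |∑ k, N j k * x k| := (EuclideanSpace.norm_le_sum_abs _).trans_eq rfl
    _ ≤ ∑ k, (∑ j, |N j k|) * |x k| := by
        simp only [sum_mul, ← abs_mul]
        rw [sum_comm]
        exact sum_le_sum fun j _ => abs_sum_le_sum_abs _ _
    _ ≤ C * ∑ k, |x k| := by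
        rw [mul_sum]
        exact sum_le_sum fun k _ => mul_le_mul_of_nonneg_right (hC k) (abs_nonneg _)
    _ ≤ C * (√(Fintype.card n) * ‖x‖) := by
        gcongr
        exact EuclideanSpace.sum_abs_le_sqrt_card_mul_norm x
    _ = √(Fintype.card n) * C * ‖x‖ := by ring

end Matrix

section Jacobian

variable {D : ℕ}

lemma jmat_eq_toMatrix' (F : (Fin D → ℝ) → (Fin D → ℝ)) (s : Fin D → ℝ) :
    jmat F s = LinearMap.toMatrix' (fderiv ℝ F s : (Fin D → ℝ) →ₗ[ℝ] Fin D → ℝ) :=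
  rfl

lemma jmat_comp {F G : (Fin D → ℝ) → (Fin D → ℝ)} {s : Fin D → ℝ}
    (hG : DifferentiableAt ℝ G (F s)) (hF : DifferentiableAt ℝ F s) :
    jmat (fun x => G (F x)) s = jmat G (F s) * jmat F s := by
  rw [jmat_eq_toMatrix', jmat_eq_toMatrix', jmat_eq_toMatrix', ← LinearMap.toMatrix'_comp,
    fderiv_fun_comp s hG hF]
  rfl

end Jacobian

theorem stmt15_general (D : ℕ) (Bdf Bdg : ℝ) (H : Fin D → ℝ)
    (f g fhat : (Fin D → ℝ) → (Fin D → ℝ))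
    (hfd : Differentiable ℝ f) (hgd : Differentiable ℝ g) (hfhd : Differentiable ℝ fhat)
    (hBdf : ∀ (s : Fin D → ℝ) (j k : Fin D), |fderiv ℝ f s (Pi.single k 1) j| ≤ Bdf)
    (hBdg : ∀ (z : Fin D → ℝ) (j k : Fin D), |fderiv ℝ g z (Pi.single k 1) j| ≤ Bdg)
    (hHold : ∀ (j k : Fin D) (z z' : Fin D → ℝ),
      |fderiv ℝ g z (Pi.single k 1) j - fderiv ℝ g z' (Pi.single k 1) j| ≤
        H j * Real.sqrt (∑ i, (z i - z' i) ^ 2))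
    (s : Fin D → ℝ) :
    opNormR (jmat (fun x => g (f x)) s - jmat (fun x => g (fhat x)) s) ≤
      (D : ℝ) * Real.sqrt D * Bdf * (∑ j, H j) * (∑ j, |f s j - fhat s j|) +
        (D : ℝ) * Real.sqrt D * Bdg *
          ∑ k, ∑ j, |fderiv ℝ f s (Pi.single k 1) j - fderiv ℝ fhat s (Pi.single k 1) j| := by
  set A := jmat f s
  set Ahat := jmat fhat s
  set G := jmat g (f s)
  set Ghat := jmat g (fhat s)
  set T := ∑ j, |f s j - fhat s j|
  have hsplit : jmat (fun x => g (f x)) s - jmat (fun x => g (fhat x)) s =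
      (G - Ghat) * A + Ghat * (A - Ahat) := by
    rw [jmat_comp (hgd _) (hfd s), jmat_comp (hgd _) (hfhd s)]
    noncomm_ring
  have hH : ∀ j, 0 ≤ H j := fun j => by
    simpa [Pi.single_apply] using (abs_nonneg _).trans (hHold j j (Pi.single j 1) 0)
  have hG : ∀ j i, |(G - Ghat) j i| ≤ H j * T := fun j i =>
    (hHold j i _ _).trans (by gcongr; exacts [hH j, Real.sqrt_sum_sq_le_sum_abs _])
  have hcol₁ : ∀ k, ∑ j, |((G - Ghat) * A) j k| ≤ D * Bdf * ∑ j, H j * T := by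
    simpa only [Fintype.card_fin] using
      sum_abs_mul_apply_le_of_abs_le_of_abs_le _ A hG fun i k => hBdf s i k
  have hcol₂ : ∀ k, ∑ j, |(Ghat * (A - Ahat)) j k| ≤ D * Bdg * ∑ k, ∑ j, |(A - Ahat) j k| :=
    fun k => by
      have hBdg0 : 0 ≤ Bdg := (abs_nonneg _).trans (hBdg s k k)
      refine (sum_abs_mul_apply_le_of_abs_left_le _ _ (fun j i => hBdg (fhat s) j i) k).trans ?_
      rw [Fintype.card_fin]
      exact mul_le_mul_of_nonneg_left (single_le_sum (f := fun k => ∑ j, |(A - Ahat) j k|)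
        (fun k _ => sum_nonneg fun j _ => abs_nonneg _) (mem_univ k)) (by positivity)
  calc opNormR (jmat (fun x => g (f x)) s - jmat (fun x => g (fhat x)) s)
      = ‖(G - Ghat) * A + Ghat * (A - Ahat)‖ := by rw [hsplit]; rfl
    _ ≤ ‖(G - Ghat) * A‖ + ‖Ghat * (A - Ahat)‖ := norm_add_le _ _
    _ ≤ √D * (D * Bdf * ∑ j, H j * T) + √D * (D * Bdg * ∑ k, ∑ j, |(A - Ahat) j k|) := by
      simpa only [Fintype.card_fin] using
        add_le_add (l2_opNorm_le_sqrt_card_mul_of_sum_abs_le _ hcol₁)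
          (l2_opNorm_le_sqrt_card_mul_of_sum_abs_le _ hcol₂)
    _ = _ := by simp only [A, Ahat, jmat, Matrix.sub_apply, of_apply, ← sum_mul]; ring

/-- Jacobian difference bound: with entrywise bounds `B_∂f`, `B_∂f⁻¹` on the Jacobians of
`f` and `f⁻¹` and a Hölder-`(1,1)` condition (constants `H_j`) on the gradients of the
components of `f⁻¹`, the operator norm of `D(f⁻¹∘f)(s) − D(f⁻¹∘f̂)(s)` is bounded by
`D^{3/2} B_∂f (Σ_j H_j) Σ_j |f_j(s) − f̂_j(s)|
  + D^{3/2} B_∂f⁻¹ Σ_k Σ_j |∂f_j/∂s_k(s) − ∂f̂_j/∂s_k(s)|`. -/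
theorem stmt15 (D : ℕ) (hD : 1 ≤ D) (Bdf Bdg : ℝ) (H : Fin D → ℝ)
    (f g fhat : (Fin D → ℝ) → (Fin D → ℝ))
    (hfd : Differentiable ℝ f) (hgd : Differentiable ℝ g) (hfhd : Differentiable ℝ fhat)
    (hgf : ∀ s, g (f s) = s) (hfg : ∀ z, f (g z) = z)
    (hBdf : ∀ (s : Fin D → ℝ) (j k : Fin D), |fderiv ℝ f s (Pi.single k 1) j| ≤ Bdf)
    (hBdg : ∀ (z : Fin D → ℝ) (j k : Fin D), |fderiv ℝ g z (Pi.single k 1) j| ≤ Bdg)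
    (hHold : ∀ (j k : Fin D) (z z' : Fin D → ℝ),
      |fderiv ℝ g z (Pi.single k 1) j - fderiv ℝ g z' (Pi.single k 1) j| ≤
        H j * Real.sqrt (∑ i, (z i - z' i) ^ 2))
    (s : Fin D → ℝ) :
    opNormR (jmat (fun x => g (f x)) s - jmat (fun x => g (fhat x)) s) ≤
      (D : ℝ) * Real.sqrt D * Bdf * (∑ j, H j) * (∑ j, |f s j - fhat s j|) +
        (D : ℝ) * Real.sqrt D * Bdg *
          ∑ k, ∑ j, |fderiv ℝ f s (Pi.single k 1) j - fderiv ℝ fhat s (Pi.single k 1) j| :=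
  stmt15_general D Bdf Bdg H f g fhat hfd hgd hfhd hBdf hBdg hHold s
end
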